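/- Let a, b, c be the tree automorphisms of the binary tree defined by the wreath recursions a = σ(a,a), b = (c,a), c = (a,a) (automaton number 748). Then G₇₄₈ = ⟨a,b⟩ × ⟨c⟩ with ⟨a,b⟩ ≅ D₄, the dihedral group of order 8, and ⟨c⟩ ≅ C₂; in particular the group generated by a, b, c is isomorphic to D₄ × C₂. -/
import Mathlib


/-- An invertible automaton over the two-letter alphabet `Bool`:
a set of states `Q`, a transition map and an output map such that each state
acts on the alphabet by a permutation. -/
structure BinAutomaton (Q : Type*) where
  trans : Q → Bool → Q
  out : Q → Bool → Bool
  out_bij : ∀ q, Function.Bijective (out q)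

namespace BinAutomaton

variable {Q : Type*} (A : BinAutomaton Q)

/-- The action of a state on finite binary words:
`q(xw) = ρ(q,x) · (τ(q,x))(w)`. -/
def act : Q → List Bool → List Bool
  | _, [] => []
  | q, x :: w => A.out q x :: act (A.trans q x) w

theorem act_injective (q : Q) : Function.Injective (A.act q) := by
  intro u
  induction u generalizing q with
  | nil =>
    intro v h
    cases v with
    | nil => rfl
    | cons y v => simp [act] at h
  | cons x u ih =>
    intro v h
    cases v with
    | nil => simp [act] at h
    | cons y v =>
      simp only [act, List.cons.injEq] at h
      obtain ⟨h1, h2⟩ := h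
      obtain rfl : x = y := (A.out_bij q).1 h1
      rw [ih _ h2]

theorem act_surjective (q : Q) : Function.Surjective (A.act q) := by
  intro v
  induction v generalizing q with
  | nil => exact ⟨[], rfl⟩
  | cons y v ih =>
    obtain ⟨x, hx⟩ := (A.out_bij q).2 y
    obtain ⟨w, hw⟩ := ih (A.trans q x)
    exact ⟨x :: w, by simp [act, hx, hw]⟩

/-- The tree automorphism defined by the state `q`. -/
noncomputable def perm (q : Q) : Equiv.Perm (List Bool) :=
  Equiv.ofBijective (A.act q) ⟨A.act_injective q, A.act_surjective q⟩

/-- The group generated by the automaton: the subgroup of the group of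
bijections of the binary tree generated by the states. -/
noncomputable def autGroup : Subgroup (Equiv.Perm (List Bool)) :=
  Subgroup.closure (Set.range A.perm)

end BinAutomaton

/-- Helper constructing a 3-state automaton from the sections at `0`, the
sections at `1`, and the activity of each state. -/
def mkAut3 (t0 t1 : Fin 3 → Fin 3) (actv : Fin 3 → Bool) : BinAutomaton (Fin 3) where
  trans q x := cond x (t1 q) (t0 q)
  out q x := xor (actv q) x
  out_bij q := by
    have h : ∀ b : Bool, Function.Bijective fun x => xor b x := by decide
    exact h (actv q)

/-- Automaton number 748:
`a = σ(a,a)`, `b = (c,a)`, `c = (a,a)` (states `0 = a`, `1 = b`, `2 = c`). -/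
def A748 : BinAutomaton (Fin 3) :=
  mkAut3 ![0, 2, 0] ![0, 0, 0] ![true, false, false]

noncomputable def a : Equiv.Perm (List Bool) := A748.perm 0
noncomputable def b : Equiv.Perm (List Bool) := A748.perm 1
noncomputable def c : Equiv.Perm (List Bool) := A748.perm 2

open Equiv BinAutomaton

section Aut748Proof

lemma act0_cons (x : Bool) (w : List Bool) :
    A748.act 0 (x :: w) = (!x) :: A748.act 0 w := by cases x <;> rfl

lemma act1_false (w : List Bool) :
    A748.act 1 (false :: w) = false :: A748.act 2 w := rfl

lemma act1_true (w : List Bool) :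
    A748.act 1 (true :: w) = true :: A748.act 0 w := rfl

lemma act2_cons (x : Bool) (w : List Bool) :
    A748.act 2 (x :: w) = x :: A748.act 0 w := by cases x <;> rfl

lemma act00 (w : List Bool) : A748.act 0 (A748.act 0 w) = w := by
  induction w with
  | nil => rfl
  | cons x w ih => simp [act0_cons, ih]

lemma act02_20 (w : List Bool) :
    A748.act 0 (A748.act 2 w) = A748.act 2 (A748.act 0 w) := by
  cases w with
  | nil => rfl
  | cons x w => simp [act0_cons, act2_cons]

lemma act22 (w : List Bool) : A748.act 2 (A748.act 2 w) = w := by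
  cases w with
  | nil => rfl
  | cons x w => simp [act2_cons, act00]

lemma act11 (w : List Bool) : A748.act 1 (A748.act 1 w) = w := by
  cases w with
  | nil => rfl
  | cons x w => cases x
                · simp [act1_false, act22]
                · simp [act1_true, act00]

lemma act12_21 (w : List Bool) :
    A748.act 1 (A748.act 2 w) = A748.act 2 (A748.act 1 w) := by
  cases w with
  | nil => rfl
  | cons x w =>
      cases x
      · simp [act1_false, act2_cons, act02_20]
      · simp [act1_true, act2_cons, act00]

lemma actS (w : List Bool) :
    A748.act 0 (A748.act 2 (A748.act 0 (A748.act 2 w))) = w := by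
  rw [← act02_20, act22, act00]

lemma actP_false (w : List Bool) :
    A748.act 0 (A748.act 1 (false :: w)) = true :: A748.act 0 (A748.act 2 w) := by
  rw [act1_false, act0_cons]; rfl

lemma actP_true (w : List Bool) :
    A748.act 0 (A748.act 1 (true :: w)) = false :: w := by
  rw [act1_true, act0_cons, act00]; rfl

lemma actP4 (w : List Bool) :
    A748.act 0 (A748.act 1 (A748.act 0 (A748.act 1 (A748.act 0 (A748.act 1
      (A748.act 0 (A748.act 1 w))))))) = w := by
  cases w with
  | nil => rfl
  | cons x w =>
      cases x
      · rw [actP_false, actP_true, actP_false, actP_true, actS]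
      · rw [actP_true, actP_false, actP_true, actP_false, actS]

lemma a_mul_a : a * a = 1 := Equiv.ext fun w => act00 w

lemma b_mul_b : b * b = 1 := Equiv.ext fun w => act11 w

lemma c_mul_c : c * c = 1 := Equiv.ext fun w => act22 w

lemma comm_ca : Commute c a := (Equiv.ext fun w => (act02_20 w).symm)

lemma comm_cb : Commute c b := (Equiv.ext fun w => (act12_21 w).symm)

lemma p4 : (a * b) ^ 4 = 1 := by
  refine Equiv.ext fun w => ?_
  show (a*b) ((a*b) ((a*b) ((a*b) w))) = w
  exact actP4 w

lemma a_inv : a⁻¹ = a := inv_eq_of_mul_eq_one_right a_mul_a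
lemma b_inv : b⁻¹ = b := inv_eq_of_mul_eq_one_right b_mul_b
lemma c_inv : c⁻¹ = c := inv_eq_of_mul_eq_one_right c_mul_c

lemma p_inv : (a * b)⁻¹ = (a * b) ^ 3 := by
  have : (a * b) * (a * b) ^ 3 = 1 := by
    rw [← pow_succ']; exact p4
  exact inv_eq_of_mul_eq_one_right this

lemma pa_rel : (a * b) * a = a * (a * b) ^ 3 := by
  rw [← p_inv, mul_inv_rev, a_inv, b_inv, mul_assoc]

lemma pmod (k : ℕ) : (a * b) ^ k = (a * b) ^ (k % 4) := by
  conv_lhs => rw [← Nat.div_add_mod k 4]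
  rw [pow_add, pow_mul, p4, one_pow, one_mul]

lemma pcongr {m n : ℕ} (h : (m : ZMod 4) = (n : ZMod 4)) :
    (a * b) ^ m = (a * b) ^ n := by
  rw [pmod m, pmod n, (ZMod.natCast_eq_natCast_iff m n 4).mp h]

lemma ccongr {m n : ℕ} (h : (m : ZMod 2) = (n : ZMod 2)) :
    c ^ m = c ^ n := by
  have c2 : c ^ 2 = 1 := by rw [pow_two, c_mul_c]
  have cmod : ∀ k, c ^ k = c ^ (k % 2) := fun k => by
    conv_lhs => rw [← Nat.div_add_mod k 2]
    rw [pow_add, pow_mul, c2, one_pow, one_mul]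
  rw [cmod m, cmod n, (ZMod.natCast_eq_natCast_iff m n 2).mp h]

lemma pna (n : ℕ) : (a * b) ^ n * a = a * (a * b) ^ (3 * n) := by
  induction n with
  | zero => simp
  | succ k ih =>
      rw [pow_succ, mul_assoc, pa_rel, ← mul_assoc, ih,
        mul_assoc, ← pow_add]
      congr 2

lemma valcast (i : ZMod 4) : ((i.val : ℕ) : ZMod 4) = i :=
  ZMod.natCast_rightInverse i

lemma valcast2 (i : ZMod 2) : ((i.val : ℕ) : ZMod 2) = i :=
  ZMod.natCast_rightInverse i

/-- The candidate map `D₄ → Perm`. -/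
noncomputable def psiFun : DihedralGroup 4 → Equiv.Perm (List Bool)
  | .r i => (a * b) ^ i.val
  | .sr i => a * (a * b) ^ i.val

lemma psiFun_mul (x y : DihedralGroup 4) :
    psiFun (x * y) = psiFun x * psiFun y := by
  have h4 : (4 : ZMod 4) = 0 := rfl
  rcases x with i | i <;> rcases y with j | j
  · show psiFun (.r (i + j)) = _
    show (a*b) ^ (i+j).val = (a*b) ^ i.val * (a*b) ^ j.val
    rw [← pow_add]
    exact pcongr (by push_cast [valcast]; ring)
  · show psiFun (.sr (j - i)) = _
    show a * (a*b) ^ (j - i).val = (a*b) ^ i.val * (a * (a*b) ^ j.val)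
    rw [← mul_assoc, pna, mul_assoc, ← pow_add]
    congr 1
    exact pcongr (by push_cast [valcast]; linear_combination (-i) * h4)
  · show psiFun (.sr (i + j)) = _
    show a * (a*b) ^ (i + j).val = (a * (a*b) ^ i.val) * (a*b) ^ j.val
    rw [mul_assoc, ← pow_add]
    congr 1
    exact pcongr (by push_cast [valcast]; ring)
  · show psiFun (.r (j - i)) = _
    show (a*b) ^ (j - i).val = (a * (a*b) ^ i.val) * (a * (a*b) ^ j.val)
    rw [mul_assoc, ← mul_assoc ((a*b) ^ i.val), pna, ← mul_assoc,
      ← mul_assoc, a_mul_a, one_mul, ← pow_add]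
    exact pcongr (by push_cast [valcast]; linear_combination (-i) * h4)

/-- The monoid hom `D₄ → Perm` sending `r` to `ab` and `sr 0` to `a`. -/
noncomputable def psi : DihedralGroup 4 →* Equiv.Perm (List Bool) :=
  MonoidHom.mk' psiFun psiFun_mul

lemma ne_of_eval {X Y : Equiv.Perm (List Bool)} (w : List Bool)
    (h : X w ≠ Y w) : X ≠ Y := fun he => h (by rw [he])

lemma psi_ne_one {x : DihedralGroup 4} (hx : x ≠ 1) : psi x ≠ 1 := by
  rcases x with i | i
  · have hv : i.val = 0 ∨ i.val = 1 ∨ i.val = 2 ∨ i.val = 3 := by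
      have := ZMod.val_lt i; omega
    show psiFun (.r i) ≠ 1
    show (a*b) ^ i.val ≠ 1
    rcases hv with h | h | h | h
    · exact absurd (by rw [← ZMod.val_eq_zero] at *; exact h : i = (0 : ZMod 4))
        (by rintro rfl; exact hx rfl)
    · rw [h]; exact ne_of_eval [false] (by decide)
    · rw [h]; exact ne_of_eval [false, false] (by decide)
    · rw [h]; exact ne_of_eval [false] (by decide)
  · have hv : i.val = 0 ∨ i.val = 1 ∨ i.val = 2 ∨ i.val = 3 := by
      have := ZMod.val_lt i; omega
    show psiFun (.sr i) ≠ 1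
    show a * (a*b) ^ i.val ≠ 1
    rcases hv with h | h | h | h <;> rw [h]
    · exact ne_of_eval [false] (by decide)
    · exact ne_of_eval [true, false] (by decide)
    · exact ne_of_eval [false] (by decide)
    · exact ne_of_eval [false, false] (by decide)

lemma psi_injective : Function.Injective psi := by
  rw [injective_iff_map_eq_one]
  intro x hx
  by_contra hne
  exact psi_ne_one hne hx

lemma psi_ne_c (x : DihedralGroup 4) : psi x ≠ c := by
  rcases x with i | i
  · have hv : i.val = 0 ∨ i.val = 1 ∨ i.val = 2 ∨ i.val = 3 := by
      have := ZMod.val_lt i; omega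
    show (a*b) ^ i.val ≠ c
    rcases hv with h | h | h | h <;> rw [h]
    · exact ne_of_eval [false, false] (by decide)
    · exact ne_of_eval [false] (by decide)
    · exact ne_of_eval [false, false, false] (by decide)
    · exact ne_of_eval [false] (by decide)
  · have hv : i.val = 0 ∨ i.val = 1 ∨ i.val = 2 ∨ i.val = 3 := by
      have := ZMod.val_lt i; omega
    show a * (a*b) ^ i.val ≠ c
    rcases hv with h | h | h | h <;> rw [h]
    · exact ne_of_eval [false] (by decide)
    · exact ne_of_eval [false, false] (by decide)
    · exact ne_of_eval [false] (by decide)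
    · exact ne_of_eval [true, false] (by decide)

lemma psi_range : psi.range = Subgroup.closure {a, b} := by
  have haH : a ∈ Subgroup.closure {a, b} :=
    Subgroup.subset_closure (by simp)
  have hbH : b ∈ Subgroup.closure {a, b} :=
    Subgroup.subset_closure (by simp)
  apply le_antisymm
  · rintro x ⟨y, rfl⟩
    show psiFun y ∈ _
    rcases y with i | i
    · exact pow_mem (mul_mem haH hbH) _
    · exact mul_mem haH (pow_mem (mul_mem haH hbH) _)
  · rw [Subgroup.closure_le]
    rintro x hx
    simp only [Set.mem_insert_iff, Set.mem_singleton_iff] at hx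
    rcases hx with rfl | rfl
    · exact ⟨.sr 0, by show a * (a*b) ^ (0 : ZMod 4).val = a; simp⟩
    · exact ⟨.sr 1, by
        show a * (a*b) ^ (1 : ZMod 4).val = b
        show a * (a*b) ^ 1 = b
        rw [pow_one, ← mul_assoc, a_mul_a, one_mul]⟩

lemma c_notMem : c ∉ Subgroup.closure ({a, b} : Set (Equiv.Perm (List Bool))) := by
  rw [← psi_range]
  rintro ⟨y, hy⟩
  exact psi_ne_c y hy

lemma comm_c_psi (x : DihedralGroup 4) : Commute c (psi x) := by
  have hp : Commute c (a * b) := comm_ca.mul_right comm_cb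
  rcases x with i | i
  · exact hp.pow_right _
  · exact comm_ca.mul_right (hp.pow_right _)

/-- The candidate map `D₄ × C₂ → Perm`. -/
noncomputable def phiFun : DihedralGroup 4 × Multiplicative (ZMod 2) →
    Equiv.Perm (List Bool) :=
  fun x => psi x.1 * c ^ (Multiplicative.toAdd x.2).val

lemma phiFun_mul (x y : DihedralGroup 4 × Multiplicative (ZMod 2)) :
    phiFun (x * y) = phiFun x * phiFun y := by
  obtain ⟨x1, x2⟩ := x
  obtain ⟨y1, y2⟩ := y
  show psi (x1 * y1) * c ^ (Multiplicative.toAdd x2 + Multiplicative.toAdd y2).val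
      = (psi x1 * c ^ (Multiplicative.toAdd x2).val) *
        (psi y1 * c ^ (Multiplicative.toAdd y2).val)
  rw [((comm_c_psi y1).pow_left _).mul_mul_mul_comm, map_mul, ← pow_add]
  congr 1
  exact ccongr (by push_cast [valcast2]; ring)

/-- The monoid hom `D₄ × C₂ → Perm`. -/
noncomputable def phi : DihedralGroup 4 × Multiplicative (ZMod 2) →*
    Equiv.Perm (List Bool) :=
  MonoidHom.mk' phiFun phiFun_mul

lemma phi_injective : Function.Injective phi := by
  rw [injective_iff_map_eq_one]
  rintro ⟨x, y⟩ hxy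
  have hxy' : psi x * c ^ (Multiplicative.toAdd y).val = 1 := hxy
  have hv : (Multiplicative.toAdd y).val = 0 ∨ (Multiplicative.toAdd y).val = 1 := by
    have := ZMod.val_lt (Multiplicative.toAdd y); omega
  rcases hv with h | h
  · rw [h, pow_zero, mul_one] at hxy'
    have hx1 : x = 1 := psi_injective (by rw [hxy', map_one])
    have hy1 : y = 1 := by
      have : Multiplicative.toAdd y = 0 := by rw [← ZMod.val_eq_zero]; exact h
      have := congrArg Multiplicative.ofAdd this
      simpa using this
    rw [hx1, hy1]; rfl
  · rw [h, pow_one] at hxy'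
    have : psi x = c := by
      have := congrArg (· * c⁻¹) hxy'
      simpa [mul_assoc, c_inv, c_mul_c] using this
    exact absurd this (psi_ne_c x)

lemma phi_range : phi.range = Subgroup.closure {a, b, c} := by
  have haG : a ∈ Subgroup.closure ({a, b, c} : Set (Equiv.Perm (List Bool))) :=
    Subgroup.subset_closure (by simp)
  have hbG : b ∈ Subgroup.closure ({a, b, c} : Set (Equiv.Perm (List Bool))) :=
    Subgroup.subset_closure (by simp)
  have hcG : c ∈ Subgroup.closure ({a, b, c} : Set (Equiv.Perm (List Bool))) :=
    Subgroup.subset_closure (by simp)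
  apply le_antisymm
  · rintro x ⟨⟨y1, y2⟩, rfl⟩
    show psi y1 * c ^ _ ∈ _
    refine mul_mem ?_ (pow_mem hcG _)
    rcases y1 with i | i
    · exact pow_mem (mul_mem haG hbG) _
    · exact mul_mem haG (pow_mem (mul_mem haG hbG) _)
  · rw [Subgroup.closure_le]
    rintro x hx
    simp only [Set.mem_insert_iff, Set.mem_singleton_iff] at hx
    rcases hx with rfl | rfl | rfl
    · exact ⟨(.sr 0, 1), by
        show a * (a*b) ^ (0 : ZMod 4).val * c ^ (0 : ZMod 2).val = a
        simp⟩
    · exact ⟨(.sr 1, 1), by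
        show a * (a*b) ^ (1 : ZMod 4).val * c ^ (0 : ZMod 2).val = b
        show a * (a*b) ^ 1 * c ^ 0 = b
        rw [pow_one, pow_zero, mul_one, ← mul_assoc, a_mul_a, one_mul]⟩
    · exact ⟨(.r 0, Multiplicative.ofAdd 1), by
        show (a*b) ^ (0 : ZMod 4).val * c ^ (1 : ZMod 2).val = c
        show (a*b) ^ 0 * c ^ 1 = c
        rw [pow_zero, pow_one, one_mul]⟩

end Aut748Proof

/-- The group generated by automaton 748 is `D₄ × C₂`: the whole group is
isomorphic to `D₄ × C₂`, the subgroup `⟨a,b⟩` is dihedral of order 8, `c` is a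
central element of order 2 not contained in `⟨a,b⟩`, and
`G₇₄₈ = ⟨a,b⟩ × ⟨c⟩` (an internal direct product). -/
theorem automaton748_group_is_D4_times_C2 :
    Nonempty (↥(Subgroup.closure {a, b, c}) ≃*
      (DihedralGroup 4 × Multiplicative (ZMod 2))) ∧
    Nonempty (↥(Subgroup.closure {a, b}) ≃* DihedralGroup 4) ∧
    orderOf c = 2 ∧
    c ∉ Subgroup.closure {a, b} ∧
    (∀ g ∈ Subgroup.closure {a, b, c}, Commute c g) ∧
    Subgroup.closure {a, b} ⊔ Subgroup.closure {c} = Subgroup.closure {a, b, c} ∧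
    Disjoint (Subgroup.closure {a, b}) (Subgroup.closure {c}) := by
  refine ⟨?_, ?_, ?_, c_notMem, ?_, ?_, ?_⟩
  · exact ⟨((MonoidHom.ofInjective phi_injective).trans
      (MulEquiv.subgroupCongr phi_range)).symm⟩
  · exact ⟨((MonoidHom.ofInjective psi_injective).trans
      (MulEquiv.subgroupCongr psi_range)).symm⟩
  · refine orderOf_eq_prime (by rw [pow_two, c_mul_c]) ?_
    exact ne_of_eval [false, false] (by decide)
  · intro g hg
    refine Subgroup.closure_induction (fun x hx => ?_) (Commute.one_right c)
      (fun x y _ _ hx hy => hx.mul_right hy) (fun x _ hx => hx.inv_right) hg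
    simp only [Set.mem_insert_iff, Set.mem_singleton_iff] at hx
    rcases hx with rfl | rfl | rfl
    · exact comm_ca
    · exact comm_cb
    · exact Commute.refl c
  · rw [← Subgroup.closure_union]
    congr 1
    ext x
    simp only [Set.mem_union, Set.mem_insert_iff, Set.mem_singleton_iff]
    tauto
  · rw [Subgroup.disjoint_def]
    intro x hxH hxK
    obtain ⟨n, rfl⟩ := Subgroup.mem_closure_singleton.mp hxK
    have h2 : c ^ (2 : ℤ) = 1 := by rw [zpow_two, c_mul_c]
    have hcn : c ^ n = c ^ (n % 2) := by
      conv_lhs => rw [← Int.mul_ediv_add_emod n 2]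
      rw [zpow_add, zpow_mul, h2, one_zpow, one_mul]
    have hmod : n % 2 = 0 ∨ n % 2 = 1 := by omega
    rcases hmod with h | h
    · rw [hcn, h, zpow_zero]
    · exact absurd (by rwa [hcn, h, zpow_one] at hxH) c_notMem
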